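/- Under the zero-mean assumption Σ_i r_i = 0 on the residuals at step t, and when the split is nontrivial (ρ₊ ≠ 0), the MSE decrease of the greedy step satisfies ℓ(t−1) − ℓ(t) = (|I₊|/m)·ρ₊² + (|I₋|/m)·ρ₋² = −ρ₊ρ₋ = (w_t + b_t)(w_t − b_t), where the middle equality uses |I₊|ρ₊ = −|I₋|ρ₋. -/

import Mathlib

open Finset

noncomputable def fmean {m : ℕ} (r : Fin m → ℝ) (J : Finset (Fin m)) : ℝ :=
  (∑ i ∈ J, r i) / J.card

noncomputable def fvar {m : ℕ} (r : Fin m → ℝ) (J : Finset (Fin m)) : ℝ :=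
  (∑ i ∈ J, (r i - fmean r J) ^ 2) / J.card

theorem stmt_15 {m : ℕ} (r s : Fin m → ℝ) (hzero : ∑ i, r i = 0)
    (hs : ∀ i, s i = 1 ∨ s i = -1)
    (Ip Im : Finset (Fin m))
    (hIp : Ip = univ.filter (fun i => s i = 1))
    (hIm : Im = univ.filter (fun i => s i = -1))
    (hp : Ip.Nonempty) (hmm : Im.Nonempty)
    (w b : ℝ)
    (hw : w = (fmean r Ip - fmean r Im) / 2)
    (hb : b = (fmean r Ip + fmean r Im) / 2)
    (hρ : fmean r Ip ≠ 0) :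
    (Ip.card / m) * (fmean r Ip) ^ 2 + (Im.card / m) * (fmean r Im) ^ 2
        = -(fmean r Ip * fmean r Im) ∧
    (1 / m) * ∑ i, (r i) ^ 2 - (1 / m) * ∑ i, (r i - w * s i - b) ^ 2
        = (w + b) * (w - b) := by
  have hdisj : Disjoint Ip Im := by
    subst hIp hIm
    rw [Finset.disjoint_left]
    intro i hi hi'
    simp only [mem_filter] at hi hi'
    rw [hi.2] at hi'
    norm_num at hi'
  have hunion : Ip ∪ Im = univ := by
    subst hIp hIm
    ext i
    simp only [mem_union, mem_filter, mem_univ, true_and, iff_true]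
    exact hs i
  have hsplit : ∀ f : Fin m → ℝ, ∑ i, f i = ∑ i ∈ Ip, f i + ∑ i ∈ Im, f i := by
    intro f
    rw [← hunion, Finset.sum_union hdisj]
  have hcard : Ip.card + Im.card = m := by
    rw [← Finset.card_union_of_disjoint hdisj, hunion, card_univ, Fintype.card_fin]
  set p : ℝ := (Ip.card : ℝ) with hpdef
  set q : ℝ := (Im.card : ℝ) with hqdef
  have hp0 : p ≠ 0 := by
    exact Nat.cast_ne_zero.mpr hp.card_pos.ne'
  have hq0 : q ≠ 0 := by
    exact Nat.cast_ne_zero.mpr hmm.card_pos.ne'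
  have hm : p + q = (m : ℝ) := by
    rw [hpdef, hqdef, ← Nat.cast_add, hcard]
  have hm0 : (m : ℝ) ≠ 0 := by
    rw [← hm]
    positivity
  set ρp := fmean r Ip with hρp
  set ρm := fmean r Im with hρm
  have hSp : ∑ i ∈ Ip, r i = p * ρp := by
    rw [hρp, fmean]; field_simp; rfl
  have hSm : ∑ i ∈ Im, r i = q * ρm := by
    rw [hρm, fmean]; field_simp; rfl
  have hpq : p * ρp + q * ρm = 0 := by
    rw [← hSp, ← hSm, ← hsplit, hzero]
  have part1 : (p / m) * ρp ^ 2 + (q / m) * ρm ^ 2 = -(ρp * ρm) := by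
    field_simp
    linear_combination (ρp + ρm) * hpq - ρp * ρm * hm
  refine ⟨part1, ?_⟩
  have hsip : ∀ i ∈ Ip, s i = 1 := by
    intro i hi; rw [hIp] at hi; exact (mem_filter.mp hi).2
  have hsim : ∀ i ∈ Im, s i = -1 := by
    intro i hi; rw [hIm] at hi; exact (mem_filter.mp hi).2
  have e1 : ∑ i ∈ Ip, (r i - w * s i - b) ^ 2
      = ∑ i ∈ Ip, ((r i) ^ 2 - 2 * ρp * r i + ρp ^ 2) := by
    apply Finset.sum_congr rfl
    intro i hi
    rw [hsip i hi, hw, hb]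
    ring
  have e2 : ∑ i ∈ Im, (r i - w * s i - b) ^ 2
      = ∑ i ∈ Im, ((r i) ^ 2 - 2 * ρm * r i + ρm ^ 2) := by
    apply Finset.sum_congr rfl
    intro i hi
    rw [hsim i hi, hw, hb]
    ring
  have e1' : ∑ i ∈ Ip, ((r i) ^ 2 - 2 * ρp * r i + ρp ^ 2)
      = (∑ i ∈ Ip, (r i) ^ 2) - p * ρp ^ 2 := by
    simp only [Finset.sum_add_distrib, Finset.sum_sub_distrib, ← Finset.mul_sum,
      Finset.sum_const, nsmul_eq_mul, hSp]
    ring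
  have e2' : ∑ i ∈ Im, ((r i) ^ 2 - 2 * ρm * r i + ρm ^ 2)
      = (∑ i ∈ Im, (r i) ^ 2) - q * ρm ^ 2 := by
    simp only [Finset.sum_add_distrib, Finset.sum_sub_distrib, ← Finset.mul_sum,
      Finset.sum_const, nsmul_eq_mul, hSm]
    ring
  have hwb1 : w + b = ρp := by rw [hw, hb]; ring
  have hwb2 : w - b = -ρm := by rw [hw, hb]; ring
  rw [hsplit (fun i => (r i) ^ 2), hsplit (fun i => (r i - w * s i - b) ^ 2),
    e1, e2, e1', e2', hwb1, hwb2]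
  have := part1
  field_simp at this ⊢
  linarith [this]
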